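/- Let H > 0, b > 0, and m > 0 be real numbers and let F : [0, b] → ℝ be twice continuously differentiable with F''(x) ≤ H and F(x) ≥ m for all x ∈ [0, b]. If 0 < F'(b) ≤ 2·H·b, then F'(b)/F(b) ≤ √(H/m). -/

import Mathlib

/-!
Since `F'' ≤ H`, the slope `F'` can drop by at most `H·δ` over a distance `δ`, so
`F(b) - F(b - δ) ≥ F'(b)·δ - H·δ²/2`. The choice `δ = F'(b)/(2H)` (admissible because
`F'(b) ≤ 2Hb`) gives the dip inequality `F(b) ≥ m + F'(b)²/(4H)`, and the AM-GM inequality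
`F'(b) ≤ s·m + F'(b)²/(4sm)` with `s = √(H/m)` turns it into `F'(b) ≤ s·F(b)`.
-/

open Set

theorem Convex.sub_le_sub_of_hasDerivWithinAt_le {D : Set ℝ} (hD : Convex ℝ D)
    {f g f' g' : ℝ → ℝ} (hf : ∀ x ∈ D, HasDerivWithinAt f (f' x) D x)
    (hg : ∀ x ∈ D, HasDerivWithinAt g (g' x) D x) (hle : ∀ x ∈ interior D, g' x ≤ f' x)
    {x y : ℝ} (hx : x ∈ D) (hy : y ∈ D) (hxy : x ≤ y) : g y - g x ≤ f y - f x := by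
  have hmono : MonotoneOn (fun t => f t - g t) D :=
    monotoneOn_of_hasDerivWithinAt_nonneg hD (f' := fun t => f' t - g' t)
      (fun t ht => ((hf t ht).sub (hg t ht)).continuousWithinAt)
      (fun t ht => ((hf t (interior_subset ht)).sub (hg t (interior_subset ht))).mono
        interior_subset)
      (fun t ht => sub_nonneg.2 (hle t ht))
  linarith [hmono hx hy hxy]

theorem sub_quadratic_le_sub_of_deriv2_le {a b H : ℝ} {F F' F'' : ℝ → ℝ}
    (hF : ∀ x ∈ Icc a b, HasDerivWithinAt F (F' x) (Icc a b) x)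
    (hF' : ∀ x ∈ Icc a b, HasDerivWithinAt F' (F'' x) (Icc a b) x)
    (hbd : ∀ x ∈ Icc a b, F'' x ≤ H) {x : ℝ} (hx : x ∈ Icc a b) :
    F' b * (b - x) - H / 2 * (b - x) ^ 2 ≤ F b - F x := by
  have hbmem : b ∈ Icc a b := ⟨hx.1.trans hx.2, le_rfl⟩
  have hlin : ∀ x ∈ Icc a b, HasDerivWithinAt (fun t => H * t) H (Icc a b) x := fun x _ =>
    ((hasDerivAt_id x).const_mul H).hasDerivWithinAt.congr_deriv (mul_one H)
  have hF'_lower : ∀ t ∈ Icc a b, F' b - H * (b - t) ≤ F' t := fun t ht => by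
    have hslope := (convex_Icc a b).sub_le_sub_of_hasDerivWithinAt_le hlin hF'
      (fun s hs => hbd s (interior_subset hs)) ht hbmem ht.2
    linarith
  have hquad : ∀ t ∈ Icc a b, HasDerivWithinAt (fun s => F' b * s + H / 2 * (b - s) ^ 2)
      (F' b - H * (b - t)) (Icc a b) t := fun t _ => by
    have hderiv := ((hasDerivAt_id t).const_mul (F' b)).add
      (((hasDerivAt_const t b).sub (hasDerivAt_id t)).pow 2 |>.const_mul (H / 2))
    exact hderiv.hasDerivWithinAt.congr_deriv
      (by simp only [Pi.sub_apply, id_eq, Nat.add_one_sub_one, pow_one]; ring)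
  have hcompare := (convex_Icc a b).sub_le_sub_of_hasDerivWithinAt_le hF hquad
    (fun t ht => hF'_lower t (interior_subset ht)) hx hbmem hx.2
  linarith

theorem exists_add_sq_div_le_of_deriv2_le {a b H : ℝ} {F F' F'' : ℝ → ℝ}
    (hH : 0 < H) (hF : ∀ x ∈ Icc a b, HasDerivWithinAt F (F' x) (Icc a b) x)
    (hF' : ∀ x ∈ Icc a b, HasDerivWithinAt F' (F'' x) (Icc a b) x)
    (hbd : ∀ x ∈ Icc a b, F'' x ≤ H) (h0 : 0 ≤ F' b) (h2 : F' b ≤ 2 * H * (b - a)) :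
    ∃ x ∈ Icc a b, F x + F' b ^ 2 / (4 * H) ≤ F b := by
  set δ := F' b / (2 * H)
  have hδ : δ ≤ b - a := (div_le_iff₀ (by positivity)).2 (by linarith)
  have hmem : b - δ ∈ Icc a b := ⟨by linarith, sub_le_self _ (by positivity)⟩
  refine ⟨b - δ, hmem, ?_⟩
  have hdrop := sub_quadratic_le_sub_of_deriv2_le hF hF' hbd hmem
  have hval : F' b * (b - (b - δ)) - H / 2 * (b - (b - δ)) ^ 2 = 3 * F' b ^ 2 / (8 * H) := by
    simp only [δ]; field_simp; ring
  have hweaken : F' b ^ 2 / (4 * H) ≤ 3 * F' b ^ 2 / (8 * H) := by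
    rw [div_le_div_iff₀ (by positivity) (by positivity)]; nlinarith [sq_nonneg (F' b)]
  linarith

theorem div_le_sqrt_div_of_add_sq_div_le {A y H m : ℝ} (hH : 0 < H) (hm : 0 < m)
    (hy : m + A ^ 2 / (4 * H) ≤ y) : A / y ≤ √(H / m) := by
  set s := √(H / m)
  have hs : 0 < s := Real.sqrt_pos.2 (div_pos hH hm)
  have hH_eq : H = s ^ 2 * m := by rw [Real.sq_sqrt (div_pos hH hm).le]; field_simp
  have hamgm : A ≤ s * (m + A ^ 2 / (4 * H)) := by
    rw [hH_eq]
    have key : 0 ≤ (A - 2 * s * m) ^ 2 / (4 * s * m) := div_nonneg (sq_nonneg _) (by nlinarith)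
    have hgap : s * (m + A ^ 2 / (4 * (s ^ 2 * m))) - A = (A - 2 * s * m) ^ 2 / (4 * s * m) := by
      field_simp; ring
    linarith
  have hy_pos : 0 < y := (add_pos_of_pos_of_nonneg hm (by positivity)).trans_le hy
  rw [div_le_iff₀ hy_pos]
  exact hamgm.trans (mul_le_mul_of_nonneg_left hy hs.le)

theorem slope_over_value_ratio_bound_general
    (H b m : ℝ) (hH : 0 < H) (hm : 0 < m) (F F' F'' : ℝ → ℝ)
    (hF : ∀ x ∈ Set.Icc (0:ℝ) b, HasDerivWithinAt F (F' x) (Set.Icc 0 b) x)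
    (hF' : ∀ x ∈ Set.Icc (0:ℝ) b, HasDerivWithinAt F' (F'' x) (Set.Icc 0 b) x)
    (hbd : ∀ x ∈ Set.Icc (0:ℝ) b, F'' x ≤ H)
    (hlow : ∀ x ∈ Set.Icc (0:ℝ) b, m ≤ F x)
    (h1 : 0 < F' b) (h2 : F' b ≤ 2 * H * b) :
    F' b / F b ≤ Real.sqrt (H / m) := by
  obtain ⟨x, hx, hdip⟩ :=
    exists_add_sq_div_le_of_deriv2_le hH hF hF' hbd h1.le (by simpa using h2)
  exact div_le_sqrt_div_of_add_sq_div_le hH hm (by linarith [hlow x hx])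

/-- If `F` is twice continuously differentiable on `[0,b]` with `F'' ≤ H`
(`H > 0`), `F ≥ m > 0` on `[0,b]`, and `0 < F'(b) ≤ 2·H·b`, then
`F'(b)/F(b) ≤ √(H/m)`. -/
theorem slope_over_value_ratio_bound
    (H b m : ℝ) (hH : 0 < H) (hb : 0 < b) (hm : 0 < m) (F F' F'' : ℝ → ℝ)
    (hF : ∀ x ∈ Set.Icc (0:ℝ) b, HasDerivWithinAt F (F' x) (Set.Icc 0 b) x)
    (hF' : ∀ x ∈ Set.Icc (0:ℝ) b, HasDerivWithinAt F' (F'' x) (Set.Icc 0 b) x)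
    (hF''cont : ContinuousOn F'' (Set.Icc 0 b))
    (hbd : ∀ x ∈ Set.Icc (0:ℝ) b, F'' x ≤ H)
    (hlow : ∀ x ∈ Set.Icc (0:ℝ) b, m ≤ F x)
    (h1 : 0 < F' b) (h2 : F' b ≤ 2 * H * b) :
    F' b / F b ≤ Real.sqrt (H / m) :=
  slope_over_value_ratio_bound_general H b m hH hm F F' F'' hF hF' hbd hlow h1 h2
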